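/- arXiv:1509.08387 — 3 statements merged into one kernel-verified Lean document; each statement's English description precedes it below -/
import Mathlib

section
/- For a deterministic quantile search with parameter m ≥ 2 and ρ = (m-1)/m, starting with a uniform prior on θ ∈ [0,1], the expected estimation error after n measurements is E[|θ̂_n − θ|] = (1/4)·[ρ² + (1−ρ)²]^n. -/
open MeasureTheory

/-- One step of deterministic quantile search (DQS) with parameter `m` on the step
function with change point `θ`.  The state is `(a, b, d)` where `[a,b]` is the feasible
interval and `d` is the last (noiseless) measurement (`true` = label 1, move forward). -/
noncomputable def dqsStep (m θ : ℝ) : ℝ × ℝ × Bool → ℝ × ℝ × Bool :=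
  fun s =>
    let a := s.1
    let b := s.2.1
    let d := s.2.2
    let X := if d then a + (b - a) / m else b - (b - a) / m
    if X < θ then (X, b, true) else (a, X, false)

/-- State of DQS after `n` measurements, starting from feasible interval `[0,1]`
with initial (virtual) measurement `1` at `0`. -/
noncomputable def dqsState (m θ : ℝ) (n : ℕ) : ℝ × ℝ × Bool :=
  (dqsStep m θ)^[n] (0, 1, true)

/-- DQS estimate after `n` measurements: midpoint of the feasible interval. -/
noncomputable def dqsEst (m θ : ℝ) (n : ℕ) : ℝ :=
  ((dqsState m θ n).1 + (dqsState m θ n).2.1) / 2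

/-!
The first measurement of DQS on `[0, 1]` is taken at `X = 1/m` or `X = ρ`, and leaves `θ`
uniform on `[0, X]` or on `[X, 1]`. DQS is equivariant under increasing affine maps, so on
each piece the search continues as a copy of itself scaled by `X` or `1 - X`; as the error
integral scales quadratically, it gets multiplied by `X² + (1 - X)² = ρ² + (1 - ρ)²` per step,
whichever direction the search starts in. At `n = 0` it is `∫₀¹ |1/2 - θ| dθ = 1/4`.
-/

namespace DQS

noncomputable def sample (m : ℝ) (s : ℝ × ℝ × Bool) : ℝ :=
  if s.2.2 then s.1 + (s.2.1 - s.1) / m else s.2.1 - (s.2.1 - s.1) / m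

theorem dqsStep_eq (m θ : ℝ) (s : ℝ × ℝ × Bool) :
    dqsStep m θ s =
      if sample m s < θ then (sample m s, s.2.1, true) else (s.1, sample m s, false) :=
  rfl

noncomputable def mid (s : ℝ × ℝ × Bool) : ℝ := (s.1 + s.2.1) / 2

def rescale (c L : ℝ) (s : ℝ × ℝ × Bool) : ℝ × ℝ × Bool :=
  (c + L * s.1, c + L * s.2.1, s.2.2)

/-- `(b - a)` times the expected error of DQS started in state `s = (a, b, d)` when `θ` is
uniform on `[a, b]`. -/
noncomputable def risk (m : ℝ) (s : ℝ × ℝ × Bool) (n : ℕ) : ℝ :=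
  ∫ θ in s.1..s.2.1, |mid ((dqsStep m θ)^[n] s) - θ|

section Rescale

variable {m c L : ℝ}

theorem sample_rescale (s : ℝ × ℝ × Bool) : sample m (rescale c L s) = c + L * sample m s := by
  unfold sample rescale
  split_ifs <;> ring

theorem mid_rescale (s : ℝ × ℝ × Bool) : mid (rescale c L s) = c + L * mid s := by
  unfold mid rescale
  ring

theorem semiconj_rescale_dqsStep (hL : 0 < L) (θ : ℝ) :
    Function.Semiconj (rescale c L) (dqsStep m θ) (dqsStep m (c + L * θ)) := by
  intro s
  have hlt : c + L * sample m s < c + L * θ ↔ sample m s < θ := by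
    rw [add_lt_add_iff_left, mul_lt_mul_iff_right₀ hL]
  simp only [dqsStep_eq, sample_rescale, hlt]
  split_ifs <;> rfl

theorem risk_rescale (hL : 0 < L) (s : ℝ × ℝ × Bool) (n : ℕ) :
    risk m (rescale c L s) n = L ^ 2 * risk m s n := by
  have hpt (θ : ℝ) : |mid ((dqsStep m (L * θ + c))^[n] (rescale c L s)) - (L * θ + c)| =
      L * |mid ((dqsStep m θ)^[n] s) - θ| := by
    rw [add_comm, ← ((semiconj_rescale_dqsStep hL θ).iterate_right n).eq, mid_rescale,
      add_sub_add_left_eq_sub, ← mul_sub, abs_mul, abs_of_pos hL]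
  have := intervalIntegral.smul_integral_comp_mul_add (a := s.1) (b := s.2.1)
    (fun θ => |mid ((dqsStep m θ)^[n] (rescale c L s)) - θ|) L c
  simp only [hpt, intervalIntegral.integral_const_mul, smul_eq_mul] at this
  rw [risk, risk, show (rescale c L s).1 = L * s.1 + c by simp only [rescale]; ring,
    show (rescale c L s).2.1 = L * s.2.1 + c by simp only [rescale]; ring, ← this]
  ring

end Rescale

theorem measurable_iterate_dqsStep (m : ℝ) (s : ℝ × ℝ × Bool) (n : ℕ) :
    Measurable fun θ => (dqsStep m θ)^[n] s := by
  induction n with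
  | zero => exact measurable_const
  | succ n ih =>
    have ha : Measurable fun θ => ((dqsStep m θ)^[n] s).1 := measurable_fst.comp ih
    have hb : Measurable fun θ => ((dqsStep m θ)^[n] s).2.1 :=
      measurable_fst.comp (measurable_snd.comp ih)
    have hd : Measurable fun θ => ((dqsStep m θ)^[n] s).2.2 :=
      measurable_snd.comp (measurable_snd.comp ih)
    have hX : Measurable fun θ => sample m ((dqsStep m θ)^[n] s) :=
      Measurable.ite (hd (measurableSet_singleton true))
        (ha.add ((hb.sub ha).div_const m)) (hb.sub ((hb.sub ha).div_const m))
    simp only [Function.iterate_succ_apply', dqsStep_eq]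
    exact Measurable.ite (measurableSet_lt hX measurable_id)
      (hX.prodMk (hb.prodMk measurable_const)) (ha.prodMk (hX.prodMk measurable_const))

section Nested

variable {m : ℝ}

theorem sample_mem_Icc (hm : 1 ≤ m) {s : ℝ × ℝ × Bool} (hs : s.1 ≤ s.2.1) :
    sample m s ∈ Set.Icc s.1 s.2.1 := by
  have h0 : 0 ≤ (s.2.1 - s.1) / m := div_nonneg (sub_nonneg.2 hs) (by linarith)
  have h1 : (s.2.1 - s.1) / m ≤ s.2.1 - s.1 := div_le_self (sub_nonneg.2 hs) hm
  unfold sample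
  split_ifs <;> constructor <;> linarith

theorem dqsStep_nested (hm : 1 ≤ m) (θ : ℝ) {s : ℝ × ℝ × Bool} (hs : s.1 ≤ s.2.1) :
    s.1 ≤ (dqsStep m θ s).1 ∧ (dqsStep m θ s).1 ≤ (dqsStep m θ s).2.1 ∧
      (dqsStep m θ s).2.1 ≤ s.2.1 := by
  obtain ⟨h0, h1⟩ := sample_mem_Icc hm hs
  rw [dqsStep_eq]
  split_ifs <;> refine ⟨?_, ?_, ?_⟩ <;> dsimp only <;> linarith

theorem iterate_dqsStep_nested (hm : 1 ≤ m) (θ : ℝ) (n : ℕ) {s : ℝ × ℝ × Bool}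
    (hs : s.1 ≤ s.2.1) :
    s.1 ≤ ((dqsStep m θ)^[n] s).1 ∧ ((dqsStep m θ)^[n] s).1 ≤ ((dqsStep m θ)^[n] s).2.1 ∧
      ((dqsStep m θ)^[n] s).2.1 ≤ s.2.1 := by
  induction n generalizing s with
  | zero => exact ⟨le_rfl, hs, le_rfl⟩
  | succ n ih =>
    obtain ⟨h0, h1, h2⟩ := dqsStep_nested hm θ hs
    obtain ⟨h3, h4, h5⟩ := ih h1
    rw [Function.iterate_succ_apply]
    exact ⟨h0.trans h3, h4, h5.trans h2⟩

theorem intervalIntegrable_risk (hm : 1 ≤ m) {s : ℝ × ℝ × Bool} (hs : s.1 ≤ s.2.1)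
    (n : ℕ) (a b : ℝ) :
    IntervalIntegrable (fun θ => |mid ((dqsStep m θ)^[n] s) - θ|) volume a b := by
  have hmeas := measurable_iterate_dqsStep m s n
  refine (continuous_const.add continuous_abs).intervalIntegrable a b |>.mono_fun'
    (g := fun θ => (|s.1| + |s.2.1|) + |θ|) ?_ (Filter.Eventually.of_forall fun θ => ?_)
  · exact ((((measurable_fst.comp hmeas).add
      (measurable_fst.comp (measurable_snd.comp hmeas))).div_const 2).sub
        measurable_id).abs.aestronglyMeasurable
  · obtain ⟨h0, h1, h2⟩ := iterate_dqsStep_nested hm θ n hs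
    have hmid : |mid ((dqsStep m θ)^[n] s)| ≤ |s.1| + |s.2.1| := by
      rw [abs_le, mid]
      constructor <;> cases abs_cases s.1 <;> cases abs_cases s.2.1 <;> linarith
    dsimp only
    rw [Real.norm_eq_abs, abs_abs]
    exact (abs_sub _ _).trans (by linarith)

theorem risk_succ (hm : 1 ≤ m) {s : ℝ × ℝ × Bool} (hs : s.1 ≤ s.2.1) (n : ℕ) :
    risk m s (n + 1) =
      risk m (s.1, sample m s, false) n + risk m (sample m s, s.2.1, true) n := by
  obtain ⟨h0, h1⟩ := sample_mem_Icc hm hs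
  have hint := intervalIntegrable_risk hm hs (n + 1)
  rw [risk, ← intervalIntegral.integral_add_adjacent_intervals (hint _ (sample m s)) (hint _ _)]
  congr 1 <;> refine intervalIntegral.integral_congr_uIoo fun θ hθ => ?_
  · rw [Set.uIoo_of_le h0] at hθ
    rw [Function.iterate_succ_apply, dqsStep_eq, if_neg (not_lt.2 hθ.2.le)]
  · rw [Set.uIoo_of_le h1] at hθ
    rw [Function.iterate_succ_apply, dqsStep_eq, if_pos hθ.1]

end Nested

theorem integral_abs_half_sub : ∫ θ in (0:ℝ)..1, |1 / 2 - θ| = 1 / 4 := by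
  have hc : Continuous fun θ : ℝ => |1 / 2 - θ| := by fun_prop
  have hleft : ∫ θ in (0:ℝ)..1 / 2, |1 / 2 - θ| = ∫ θ in (0:ℝ)..1 / 2, (1 / 2 - θ) :=
    intervalIntegral.integral_congr fun θ hθ => by
      rw [Set.uIcc_of_le (by norm_num)] at hθ
      exact abs_of_nonneg (by linarith [hθ.2])
  have hright : ∫ θ in (1 / 2 : ℝ)..1, |1 / 2 - θ| = ∫ θ in (1 / 2 : ℝ)..1, (θ - 1 / 2) :=
    intervalIntegral.integral_congr fun θ hθ => by
      rw [Set.uIcc_of_le (by norm_num)] at hθ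
      exact abs_sub_comm (1 / 2 : ℝ) θ ▸ abs_of_nonneg (by linarith [hθ.1])
  rw [← intervalIntegral.integral_add_adjacent_intervals (hc.intervalIntegrable 0 (1 / 2))
    (hc.intervalIntegrable _ 1), hleft, hright, intervalIntegral.integral_sub
    intervalIntegrable_const intervalIntegral.intervalIntegrable_id,
    intervalIntegral.integral_sub intervalIntegral.intervalIntegrable_id intervalIntegrable_const]
  norm_num [integral_id]

theorem risk_unit {m : ℝ} (hm : 1 < m) (n : ℕ) (d : Bool) :
    risk m (0, 1, d) n = 1 / 4 * (((m - 1) / m) ^ 2 + (1 - (m - 1) / m) ^ 2) ^ n := by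
  induction n generalizing d with
  | zero => simpa [risk, mid] using integral_abs_half_sub
  | succ n ih =>
    set X := sample m (0, 1, d)
    have hX : X = 1 / m ∨ X = 1 - 1 / m := by
      cases d <;> simp [X, sample]
    obtain ⟨hX0, hX1, hsq⟩ : 0 < X ∧ 0 < 1 - X ∧
        X ^ 2 + (1 - X) ^ 2 = ((m - 1) / m) ^ 2 + (1 - (m - 1) / m) ^ 2 := by
      have hinv : 0 < 1 / m ∧ 1 / m < 1 :=
        ⟨div_pos one_pos (by linarith), (div_lt_one (by linarith)).2 hm⟩
      rw [show (m - 1) / m = 1 - 1 / m by field_simp]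
      rcases hX with h | h <;> rw [h] <;> exact ⟨by linarith, by linarith, by ring⟩
    have hleft : ((0:ℝ), X, false) = rescale 0 X (0, 1, false) := by simp [rescale]
    have hright : (X, (1:ℝ), true) = rescale X (1 - X) (0, 1, true) := by simp [rescale]
    rw [risk_succ hm.le (by norm_num), hleft, hright, risk_rescale hX0, risk_rescale hX1, ih, ih,
      ← hsq]
    ring

end DQS

/-- For DQS with parameter `m ≥ 2` and `ρ = (m-1)/m`, with a uniform prior on
`θ ∈ [0,1]`, the expected estimation error after `n` measurements is
`(1/4)·[ρ² + (1−ρ)²]^n`. -/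
theorem dqs_expected_error (m : ℝ) (hm : 2 ≤ m) (n : ℕ) :
    ∫ θ in Set.Ioo (0:ℝ) 1, |dqsEst m θ n - θ| =
      (1/4) * (((m-1)/m)^2 + (1 - (m-1)/m)^2)^n := by
  rw [← integral_Ioc_eq_integral_Ioo, ← intervalIntegral.integral_of_le zero_le_one]
  exact DQS.risk_unit (by linarith) n true
end

section
/- In deterministic quantile search with parameter m, after n noiseless measurements the width of the feasible interval containing θ equals a product of n factors, each of which is either ρ = (m-1)/m or 1−ρ = 1/m, so the estimation error satisfies |θ̂_n − θ| ≤ (1/2)·ρ^n for all θ. -/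
/-!
Each measurement is taken at the point splitting the feasible interval `[a, b]` in the ratio
`1 : (m - 1)` or `(m - 1) : 1`, and the answer keeps one of the two pieces; so every step
multiplies the width by `ρ = (m - 1)/m` or by `1 - ρ = 1/m`, and the piece kept still contains
`θ`. Since `1/m ≤ ρ` for `m ≥ 2`, the width after `n` steps is at most `ρ ^ n`, and the midpoint
of an interval containing `θ` is within half its width of `θ`.
-/

section

variable {m θ : ℝ}

theorem dqsState_succ (n : ℕ) : dqsState m θ (n + 1) = dqsStep m θ (dqsState m θ n) :=
  Function.iterate_succ_apply' _ _ _

theorem dqsStep_mem_Icc {s : ℝ × ℝ × Bool} (hs : θ ∈ Set.Icc s.1 s.2.1) :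
    θ ∈ Set.Icc (dqsStep m θ s).1 (dqsStep m θ s).2.1 := by
  obtain ⟨ha, hb⟩ := hs
  dsimp only [dqsStep]
  generalize (if s.2.2 = true then _ else _) = X
  split_ifs with hX
  · exact ⟨hX.le, hb⟩
  · exact ⟨ha, not_lt.mp hX⟩

theorem dqsState_mem_Icc (hθ : θ ∈ Set.Icc (0:ℝ) 1) (n : ℕ) :
    θ ∈ Set.Icc (dqsState m θ n).1 (dqsState m θ n).2.1 := by
  induction n with
  | zero => exact hθ
  | succ n ih => rw [dqsState_succ]; exact dqsStep_mem_Icc ih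

theorem dqsStep_width (hm : m ≠ 0) (s : ℝ × ℝ × Bool) :
    ∃ c, (c = (m-1)/m ∨ c = 1 - (m-1)/m) ∧
      (dqsStep m θ s).2.1 - (dqsStep m θ s).1 = c * (s.2.1 - s.1) := by
  obtain ⟨a, b, d⟩ := s
  have hρ : ∀ x, x - x / m = (m-1)/m * x := fun x => by field_simp
  have hρc : ∀ x, x / m = (1 - (m-1)/m) * x := fun x => by field_simp; ring
  cases d <;> simp only [dqsStep, Bool.false_eq_true, ↓reduceIte] <;> split_ifs
  · exact ⟨1 - (m-1)/m, Or.inr rfl, by rw [← hρc]; ring⟩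
  · exact ⟨(m-1)/m, Or.inl rfl, by rw [← hρ]; ring⟩
  · exact ⟨(m-1)/m, Or.inl rfl, by rw [← hρ]; ring⟩
  · exact ⟨1 - (m-1)/m, Or.inr rfl, by rw [← hρc]; ring⟩

theorem dqsState_width (hm : m ≠ 0) (n : ℕ) :
    ∃ c : Fin n → ℝ, (∀ i, c i = (m-1)/m ∨ c i = 1 - (m-1)/m) ∧
      (dqsState m θ n).2.1 - (dqsState m θ n).1 = ∏ i, c i := by
  induction n with
  | zero => exact ⟨Fin.elim0, fun i => i.elim0, by simp [dqsState]⟩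
  | succ n ih =>
    obtain ⟨c, hc, hw⟩ := ih
    obtain ⟨c₀, hc₀, hw₀⟩ := dqsStep_width (θ := θ) hm (dqsState m θ n)
    exact ⟨Fin.cons c₀ c, Fin.cases hc₀ hc, by rw [dqsState_succ, hw₀, hw, Fin.prod_cons]⟩

theorem prod_le_pow_of_forall_eq_or_eq (hm : 2 ≤ m) {n : ℕ} {c : Fin n → ℝ}
    (hc : ∀ i, c i = (m-1)/m ∨ c i = 1 - (m-1)/m) : ∏ i, c i ≤ ((m-1)/m) ^ n := by
  have hm₀ : 0 < m := by linarith
  have hc_bounds : ∀ i, 0 ≤ c i ∧ c i ≤ (m-1)/m := by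
    have h1 : 1 - (m-1)/m = 1/m := by field_simp; ring
    intro i
    rcases hc i with h | h <;> rw [h]
    · exact ⟨div_nonneg (by linarith) hm₀.le, le_rfl⟩
    · rw [h1]; exact ⟨by positivity, div_le_div_of_nonneg_right (by linarith) hm₀.le⟩
  calc ∏ i, c i ≤ ∏ _i : Fin n, (m-1)/m :=
        Finset.prod_le_prod (fun i _ => (hc_bounds i).1) (fun i _ => (hc_bounds i).2)
    _ = ((m-1)/m) ^ n := Fin.prod_const n _

end

theorem abs_midpoint_sub_le {a b x : ℝ} (hx : x ∈ Set.Icc a b) : |(a + b) / 2 - x| ≤ (b - a) / 2 := by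
  rw [abs_le]
  constructor <;> linarith [hx.1, hx.2]

/-- After `n` noiseless DQS measurements the feasible-interval width is a product of
`n` factors, each equal to `ρ = (m-1)/m` or `1 − ρ = 1/m`, hence
`|θ̂_n − θ| ≤ (1/2)·ρ^n` for all `θ ∈ [0,1]`. -/
theorem dqs_width_product_and_error_bound (m θ : ℝ) (hm : 2 ≤ m)
    (hθ : θ ∈ Set.Icc (0:ℝ) 1) (n : ℕ) :
    (∃ c : Fin n → ℝ, (∀ i, c i = (m-1)/m ∨ c i = 1 - (m-1)/m) ∧
      (dqsState m θ n).2.1 - (dqsState m θ n).1 = ∏ i, c i) ∧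
    |dqsEst m θ n - θ| ≤ (1/2) * ((m-1)/m)^n := by
  obtain ⟨c, hc, hw⟩ := dqsState_width (θ := θ) (by linarith : m ≠ 0) n
  refine ⟨⟨c, hc, hw⟩, ?_⟩
  calc |dqsEst m θ n - θ| ≤ ((dqsState m θ n).2.1 - (dqsState m θ n).1) / 2 :=
        abs_midpoint_sub_le (dqsState_mem_Icc hθ n)
    _ ≤ (1/2) * ((m-1)/m)^n := by
        rw [hw]; linarith [prod_le_pow_of_forall_eq_or_eq hm hc]
end

section
/- Let D₁ be the distance traveled by deterministic quantile search with parameter m before first passing the change point θ (uniform on [0,1]). Then E[D₁] = m/(2m−1). -/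
open MeasureTheory

/-- The distance traveled by DQS with parameter `m` before first passing the change
point `θ`: the first forward sample location `1 - ρ^{i+1}` (with `ρ = (m-1)/m`)
strictly beyond `θ`. -/
noncomputable def dqsFirstPassDist (m θ : ℝ) : ℝ :=
  sInf {x : ℝ | ∃ i : ℕ, x = 1 - ((m-1)/m)^(i+1) ∧ θ < x}

/-!
On the cell `[1 - ρ^i, 1 - ρ^(i+1))` the first sample beyond `θ` is `1 - ρ^(i+1)`, so with
`ρ = (m - 1)/m` the expectation is the series `∑ (ρ^i - ρ^(i+1)) (1 - ρ^(i+1))`, a difference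
of two geometric series summing to `1/(1 + ρ) = m/(2m - 1)`.
-/

open Set

section PiecewiseConstant

variable {f : ℝ → ℝ}

theorem setIntegral_Ico_of_eqOn_const {a b c : ℝ} (hab : a ≤ b)
    (hf : EqOn f (fun _ => c) (Ico a b)) : ∫ x in Ico a b, f x = (b - a) * c := by
  rw [setIntegral_congr_fun measurableSet_Ico hf, setIntegral_const,
    Real.volume_real_Ico_of_le hab, smul_eq_mul]

theorem integral_iUnion_Ico_of_eqOn_const {a c : ℕ → ℝ} (ha : Monotone a)
    (hf : ∀ i, EqOn f (fun _ => c i) (Ico (a i) (a (i + 1)))) (hc : ∀ i, 0 ≤ c i) {S : ℝ}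
    (hS : HasSum (fun i => (a (i + 1) - a i) * c i) S) :
    ∫ x in ⋃ i, Ico (a i) (a (i + 1)), f x = S := by
  have hcell : ∀ i, ∫ x in Ico (a i) (a (i + 1)), f x = (a (i + 1) - a i) * c i := fun i =>
    setIntegral_Ico_of_eqOn_const (ha i.le_succ) (hf i)
  have hcell_norm : ∀ i, ∫ x in Ico (a i) (a (i + 1)), ‖f x‖ = (a (i + 1) - a i) * c i :=
    fun i => setIntegral_Ico_of_eqOn_const (ha i.le_succ) fun x hx => by
      rw [hf i hx, Real.norm_of_nonneg (hc i)]
  have hint : IntegrableOn f (⋃ i, Ico (a i) (a (i + 1))) :=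
    integrableOn_iUnion_of_summable_integral_norm
      (fun i => (integrableOn_const measure_Ico_lt_top.ne).congr_fun (hf i).symm measurableSet_Ico)
      (by simpa only [hcell_norm] using hS.summable)
  refine (hasSum_integral_iUnion (fun _ => measurableSet_Ico)
    (ha.pairwise_disjoint_on_Ico_succ) hint).unique ?_
  simpa only [Order.succ_eq_add_one, hcell] using hS

end PiecewiseConstant

noncomputable def firstPass {α : Type*} [ConditionallyCompleteLinearOrder α] (a : ℕ → α)
    (θ : α) : α :=
  sInf {x | ∃ i : ℕ, x = a (i + 1) ∧ θ < x}

theorem firstPass_eq_of_mem_Ico {α : Type*} [ConditionallyCompleteLinearOrder α] {a : ℕ → α}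
    (ha : Monotone a) {θ : α} {i : ℕ} (hθ : θ ∈ Ico (a i) (a (i + 1))) :
    firstPass a θ = a (i + 1) := by
  refine IsLeast.csInf_eq ⟨⟨i, rfl, hθ.2⟩, ?_⟩
  rintro x ⟨j, rfl, hj⟩
  have : i < j + 1 := ha.reflect_lt (hθ.1.trans_lt hj)
  exact ha (by omega)

section Geometric

variable {ρ : ℝ}

theorem monotone_one_sub_pow (h0 : 0 ≤ ρ) (h1 : ρ ≤ 1) : Monotone fun i : ℕ => 1 - ρ ^ i :=
  fun _ _ hij => sub_le_sub_left (pow_le_pow_of_le_one h0 h1 hij) 1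

theorem iUnion_Ico_one_sub_pow (h0 : 0 ≤ ρ) (h1 : ρ < 1) :
    ⋃ i : ℕ, Ico (1 - ρ ^ i) (1 - ρ ^ (i + 1)) = Ico 0 1 := by
  ext θ
  simp only [mem_iUnion]
  constructor
  · rintro ⟨i, hi⟩
    have hmono := monotone_one_sub_pow h0 h1.le
    exact ⟨by simpa using (hmono i.zero_le).trans hi.1, hi.2.trans_le (by simp [pow_nonneg h0])⟩
  · rintro ⟨hθ0, hθ1⟩
    obtain ⟨N, hN⟩ := exists_pow_lt_of_lt_one (sub_pos.2 hθ1) h1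
    have hθ : θ ∈ Ico (1 - ρ ^ 0) (1 - ρ ^ N) := ⟨by simpa using hθ0, by linarith⟩
    obtain ⟨i, -, hi⟩ := mem_iUnion₂.1 (Ico_subset_biUnion_Ico N (fun i => 1 - ρ ^ i) hθ)
    exact ⟨i, hi⟩

theorem hasSum_pow_sub_pow_succ_mul_one_sub_pow_succ (h : |ρ| < 1) :
    HasSum (fun i : ℕ => (ρ ^ i - ρ ^ (i + 1)) * (1 - ρ ^ (i + 1))) (1 / (1 + ρ)) := by
  have h1 : 1 - ρ ≠ 0 := by linarith [(abs_lt.1 h).2]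
  have h2 : 1 + ρ ≠ 0 := by linarith [(abs_lt.1 h).1]
  have hsq : |ρ ^ 2| < 1 := by rw [abs_pow]; exact pow_lt_one₀ (abs_nonneg ρ) h two_ne_zero
  have hS := ((hasSum_geometric_of_abs_lt_one h).mul_left (1 - ρ)).sub
    ((hasSum_geometric_of_abs_lt_one hsq).mul_left ((1 - ρ) * ρ))
  have hterm : ∀ i : ℕ, (ρ ^ i - ρ ^ (i + 1)) * (1 - ρ ^ (i + 1)) =
      (1 - ρ) * ρ ^ i - (1 - ρ) * ρ * (ρ ^ 2) ^ i := fun i => by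
    rw [← pow_mul, mul_comm 2 i, pow_mul]
    ring
  have hsum : 1 / (1 + ρ) = (1 - ρ) * (1 - ρ)⁻¹ - (1 - ρ) * ρ * (1 - ρ ^ 2)⁻¹ := by
    rw [show 1 - ρ ^ 2 = (1 - ρ) * (1 + ρ) by ring]
    field_simp
    ring
  simpa only [hterm, hsum] using hS

theorem integral_firstPass_one_sub_pow (h0 : 0 ≤ ρ) (h1 : ρ < 1) :
    ∫ θ in Ioo 0 1, firstPass (fun i => 1 - ρ ^ i) θ = 1 / (1 + ρ) := by
  have hmono := monotone_one_sub_pow h0 h1.le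
  rw [setIntegral_congr_set Ioo_ae_eq_Ico, ← iUnion_Ico_one_sub_pow h0 h1]
  refine integral_iUnion_Ico_of_eqOn_const hmono (fun i _ hθ => firstPass_eq_of_mem_Ico hmono hθ)
    (fun i => sub_nonneg.2 (pow_le_one₀ h0 h1.le)) ?_
  convert hasSum_pow_sub_pow_succ_mul_one_sub_pow_succ (abs_lt.2 ⟨by linarith, h1⟩) using 2
  ring

end Geometric

/-- For `θ` uniform on `[0,1]`, the expected distance traveled by DQS with parameter
`m` before first passing `θ` is `m/(2m−1)`. -/
theorem dqs_expected_first_pass_distance (m : ℝ) (hm : 2 ≤ m) :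
    ∫ θ in Set.Ioo (0:ℝ) 1, dqsFirstPassDist m θ = m / (2*m - 1) := by
  have hm0 : 0 < m := by linarith
  calc ∫ θ in Ioo 0 1, dqsFirstPassDist m θ = 1 / (1 + (m - 1) / m) :=
        integral_firstPass_one_sub_pow (div_nonneg (by linarith) hm0.le)
          ((div_lt_one hm0).2 (by linarith))
    _ = m / (2 * m - 1) := by field_simp; ring
end
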